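/- Every infinite Stewart word T(𝐭) contains squares of exactly the orders 3^k and 2·3^k: for every infinite sequence 𝐭 over A and every integer k ≥ 0, T(𝐭) contains a square of order 3^k and a square of order 2·3^k, and if T(𝐭) contains a square of order n ≥ 1 then n = 3^k or n = 2·3^k for some k ≥ 0. -/

import Mathlib

/-- The alphabet B = {0, 1, ?}. -/
inductive B : Type
  | b0 : B
  | b1 : B
  | bq : B
deriving DecidableEq, Inhabited, Repr

/-- The six Stewart patterns a = 01?, b = 10?, c = 0?1, d = 1?0, e = ?01, f = ?10. -/
inductive A : Type
  | a : A
  | b : A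
  | c : A
  | d : A
  | e : A
  | f : A
deriving DecidableEq, Inhabited, Repr

open B in
/-- The length-3 word over B associated with a Stewart pattern. -/
def pat : A → List B
  | .a => [b0, b1, bq]
  | .b => [b1, b0, bq]
  | .c => [b0, bq, b1]
  | .d => [b1, bq, b0]
  | .e => [bq, b0, b1]
  | .f => [bq, b1, b0]

/-- Replace the occurrences of `?` in the first word, in order,
by the symbols of the second word. -/
def fill : List B → List B → List B
  | [], _ => []
  | B.bq :: rest, s :: ss => s :: fill rest ss
  | B.bq :: rest, [] => B.bq :: fill rest []
  | x :: rest, ss => x :: fill rest ss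

/-- Helper: the finite Stewart word of the *reverse* of `t`. -/
def Trev : List A → List B
  | [] => [B.bq]
  | g :: t => fill (Trev t ++ Trev t ++ Trev t) (pat g)

/-- The finite Stewart word `T(t)`, of length `3 ^ t.length`:
`T(ε) = ?`, and `T(t g)` is obtained from `T(t)T(t)T(t)` by replacing its
three occurrences of `?`, in order, by the three symbols of the pattern `g`. -/
def stewT (t : List A) : List B := Trev t.reverse

/-- The length-`r` prefix of an infinite sequence of Stewart patterns, as a list. -/
def prefT (t : ℕ → A) (r : ℕ) : List A := List.ofFn (fun i : Fin r => t i)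

/-- The infinite Stewart word `T(𝐭)`: its symbol at position `n` is the eventual
value of `T(t_0 ⋯ t_{r-1})[n]` as `r → ∞`. -/
noncomputable def stewInf (t : ℕ → A) (n : ℕ) : B :=
  Classical.epsilon (fun v : B => ∃ R : ℕ, ∀ r ≥ R, (stewT (prefT t r)).getD n B.bq = v)

/-- `w` occurs as a factor of the infinite word `x`. -/
def FactorOf (w : List B) (x : ℕ → B) : Prop :=
  ∃ i : ℕ, ∀ j : ℕ, j < w.length → w.getD j B.bq = x (i + j)

/-- `w` has period `p ≥ 1`: `w[i] = w[i+p]` for all `0 ≤ i < |w| - p`. -/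
def HasPeriod (w : List B) (p : ℕ) : Prop :=
  1 ≤ p ∧ ∀ i : ℕ, i + p < w.length → w.getD i B.bq = w.getD (i + p) B.bq

/-- The least period `per(w)` of a word. -/
noncomputable def leastPeriod (w : List B) : ℕ := sInf {p | HasPeriod w p}

/-- The exponent `exp(w) = |w| / per(w)` of a word. -/
noncomputable def expo (w : List B) : ℝ := (w.length : ℝ) / (leastPeriod w : ℝ)

/-- The Hamming distance between two Stewart patterns: the number of positions
`p ∈ {0,1,2}` at which the length-3 words differ. -/
def ham (g h : A) : ℕ :=
  (Finset.univ.filter fun p : Fin 3 => (pat g).getD p B.bq ≠ (pat h).getD p B.bq).card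

/-- `t` is ultimately periodic. -/
def UltPeriodic (t : ℕ → A) : Prop :=
  ∃ N : ℕ, ∃ p : ℕ, 1 ≤ p ∧ ∀ n ≥ N, t (n + p) = t n

/-- An infinite word `x` is 3-automatic: there is a finite automaton with output,
reading base-3 representations least-significant-digit first (trailing zeros
allowed), computing `x`. -/
def IsThreeAutomatic (x : ℕ → B) : Prop :=
  ∃ (Q : Type) (_ : Finite Q) (δ : Q → Fin 3 → Q) (q0 : Q) (τ : Q → B),
    ∀ (r : ℕ) (e : Fin r → Fin 3),
      τ (List.foldl δ q0 (List.ofFn fun i => e i)) =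
        x (∑ i : Fin r, (e i).val * 3 ^ (i : ℕ))

-- auxiliary defs
def sA : A → ℕ
  | .a => 2 | .b => 2 | .c => 1 | .d => 1 | .e => 0 | .f => 0

def subP (g : A) (c : B) : List B := (pat g).map (fun x => if x = B.bq then c else x)

instance : Fintype A :=
  ⟨⟨{A.a, A.b, A.c, A.d, A.e, A.f}, by decide⟩, by intro x; cases x <;> decide⟩

lemma fill_nil : ∀ w : List B, fill w [] = w := by
  intro w
  induction w with
  | nil => rfl
  | cons x rest ih => cases x <;> simp [fill, ih]

lemma fill_nq : ∀ (U : List B), B.bq ∉ U → ∀ (w s : List B), fill (U ++ w) s = U ++ fill w s := by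
  intro U hU
  induction U with
  | nil => intro w s; rfl
  | cons x rest ih =>
    intro w s
    have hx : x ≠ B.bq := fun h => hU (by simp [h])
    have hrest : B.bq ∉ rest := fun h => hU (by simp [h])
    cases x with
    | bq => exact absurd rfl hx
    | b0 => simp [fill, ih hrest w s]
    | b1 => simp [fill, ih hrest w s]

lemma map_nq (c : B) : ∀ (P : List B), B.bq ∉ P → P.map (fun x => if x = B.bq then c else x) = P := by
  intro P hP
  induction P with
  | nil => rfl
  | cons x rest ih =>
    have hx : x ≠ B.bq := fun h => hP (by simp [h])
    simp only [List.map_cons, if_neg hx, ih (fun h => hP (by simp [h]))]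

lemma pat_decomp (g : A) : ∃ P0 P1 : List B, B.bq ∉ P0 ∧ B.bq ∉ P1 ∧
    pat g = P0 ++ B.bq :: P1 ∧ P0.length = sA g := by
  cases g
  · exact ⟨[B.b0, B.b1], [], by decide, by decide, rfl, rfl⟩
  · exact ⟨[B.b1, B.b0], [], by decide, by decide, rfl, rfl⟩
  · exact ⟨[B.b0], [B.b1], by decide, by decide, rfl, rfl⟩
  · exact ⟨[B.b1], [B.b0], by decide, by decide, rfl, rfl⟩
  · exact ⟨[], [B.b0, B.b1], by decide, by decide, rfl, rfl⟩
  · exact ⟨[], [B.b1, B.b0], by decide, by decide, rfl, rfl⟩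

lemma subP_eq (g : A) (c : B) {P0 P1 : List B} (h0 : B.bq ∉ P0) (h1 : B.bq ∉ P1)
    (hp : pat g = P0 ++ B.bq :: P1) : subP g c = P0 ++ c :: P1 := by
  simp only [subP, hp, List.map_append, List.map_cons, if_pos rfl, if_true, map_nq c P0 h0, map_nq c P1 h1]

lemma fill_bind (g : A) : ∀ (Y : List B) (s : List B),
    fill (Y.flatMap (subP g)) s = (fill Y s).flatMap (subP g) := by
  obtain ⟨P0, P1, h0, h1, hp, _⟩ := pat_decomp g
  intro Y
  induction Y with
  | nil => intro s; rfl
  | cons c Y' ih =>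
    intro s
    cases c with
    | bq =>
      have hσ : subP g B.bq = P0 ++ B.bq :: P1 := subP_eq g B.bq h0 h1 hp
      cases s with
      | nil =>
        simp only [List.flatMap_cons, hσ, fill_nil]
      | cons s0 ss =>
        have : fill ((P0 ++ B.bq :: P1) ++ Y'.flatMap (subP g)) (s0 :: ss)
            = P0 ++ s0 :: (P1 ++ fill (Y'.flatMap (subP g)) ss) := by
          rw [List.append_assoc]
          rw [fill_nq P0 h0]
          show P0 ++ fill (B.bq :: (P1 ++ Y'.flatMap (subP g))) (s0 :: ss) = _
          rw [show fill (B.bq :: (P1 ++ Y'.flatMap (subP g))) (s0 :: ss)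
              = s0 :: fill (P1 ++ Y'.flatMap (subP g)) ss from rfl]
          rw [fill_nq P1 h1]
        simp only [List.flatMap_cons, hσ, this, ih]
        have h2 : fill (B.bq :: Y') (s0 :: ss) = s0 :: fill Y' ss := rfl
        rw [h2]
        simp only [List.flatMap_cons, subP_eq g s0 h0 h1 hp, List.append_assoc, List.cons_append]
    | b0 =>
      have hnq : B.bq ∉ subP g B.b0 := by
        rw [subP_eq g B.b0 h0 h1 hp]; intro h
        rcases List.mem_append.1 h with h | h
        · exact h0 h
        · rcases List.mem_cons.1 h with h | h
          · exact absurd h (by decide)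
          · exact h1 h
      simp only [List.flatMap_cons, fill_nq _ hnq, ih]
      have h2 : fill (B.b0 :: Y') s = B.b0 :: fill Y' s := rfl
      rw [h2, List.flatMap_cons]
    | b1 =>
      have hnq : B.bq ∉ subP g B.b1 := by
        rw [subP_eq g B.b1 h0 h1 hp]; intro h
        rcases List.mem_append.1 h with h | h
        · exact h0 h
        · rcases List.mem_cons.1 h with h | h
          · exact absurd h (by decide)
          · exact h1 h
      simp only [List.flatMap_cons, fill_nq _ hnq, ih]
      have h2 : fill (B.b1 :: Y') s = B.b1 :: fill Y' s := rfl
      rw [h2, List.flatMap_cons]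

lemma subP_bq (g : A) : subP g B.bq = pat g := by cases g <;> rfl

lemma Trev_concat : ∀ (w : List A) (g : A), Trev (w ++ [g]) = (Trev w).flatMap (subP g) := by
  intro w
  induction w with
  | nil => intro g; cases g <;> rfl
  | cons h w' ih =>
    intro g
    show fill (Trev (w' ++ [g]) ++ Trev (w' ++ [g]) ++ Trev (w' ++ [g])) (pat h) = _
    rw [ih g]
    rw [← List.flatMap_append, ← List.flatMap_append]
    rw [fill_bind g]
    rfl

lemma stewT_cons (g : A) (u : List A) : stewT (g :: u) = (stewT u).flatMap (subP g) := by
  show Trev ((g :: u).reverse) = _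
  rw [List.reverse_cons, Trev_concat]
  rfl

lemma subP_length (g : A) (c : B) : (subP g c).length = 3 := by cases g <;> rfl

lemma flatMap_length (g : A) : ∀ X : List B, (X.flatMap (subP g)).length = 3 * X.length := by
  intro X
  induction X with
  | nil => rfl
  | cons c X' ih => simp [List.flatMap_cons, subP_length, ih]; ring

lemma stewT_length : ∀ u : List A, (stewT u).length = 3 ^ u.length := by
  intro u
  induction u with
  | nil => rfl
  | cons g u' ih =>
    rw [stewT_cons, flatMap_length, ih, List.length_cons, pow_succ]
    ring

lemma flatMap3_getD (g : A) : ∀ (X : List B) (j m : ℕ), m < 3 → j < X.length →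
    (X.flatMap (subP g)).getD (3 * j + m) B.bq = (subP g (X.getD j B.bq)).getD m B.bq := by
  intro X
  induction X with
  | nil => intro j m _ h; simp at h
  | cons c X' ih =>
    intro j m hm hj
    rw [List.flatMap_cons]
    cases j with
    | zero =>
      rw [List.getD_append _ _ _ _ (by rw [subP_length]; omega)]
      have h0 : 3 * 0 + m = m := by omega
      rw [h0]; rfl
    | succ j' =>
      rw [List.getD_append_right _ _ _ _ (by rw [subP_length]; omega)]
      have : 3 * (j' + 1) + m - (subP g c).length = 3 * j' + m := by rw [subP_length]; omega
      rw [this, ih j' m hm (by simpa using hj)]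
      rfl

lemma sA_lt (g : A) : sA g < 3 := by cases g <;> norm_num [sA]

lemma subP_getD (g : A) (c : B) (m : ℕ) (hm : m < 3) :
    (subP g c).getD m B.bq = if m = sA g then c else (pat g).getD m B.bq := by
  interval_cases m <;> cases g <;> simp [subP, pat, sA]

lemma fill_getD_ne : ∀ (w : List B) (s : List B) (n : ℕ), w.getD n B.bq ≠ B.bq →
    (fill w s).getD n B.bq = w.getD n B.bq := by
  intro w
  induction w with
  | nil => intro s n h; simp [List.getD] at h ⊢
  | cons x rest ih =>
    intro s n h
    cases x with
    | bq =>
      cases n with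
      | zero => simp [List.getD] at h
      | succ n' =>
        cases s with
        | nil =>
          show (B.bq :: fill rest []).getD (n'+1) B.bq = _
          simp only [List.getD_cons_succ] at h ⊢
          exact ih [] n' h
        | cons s0 ss =>
          show (s0 :: fill rest ss).getD (n'+1) B.bq = _
          simp only [List.getD_cons_succ] at h ⊢
          exact ih ss n' h
    | b0 =>
      have : fill (B.b0 :: rest) s = B.b0 :: fill rest s := rfl
      rw [this]
      cases n with
      | zero => rfl
      | succ n' =>
        simp only [List.getD_cons_succ] at h ⊢
        exact ih s n' h
    | b1 =>
      have : fill (B.b1 :: rest) s = B.b1 :: fill rest s := rfl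
      rw [this]
      cases n with
      | zero => rfl
      | succ n' =>
        simp only [List.getD_cons_succ] at h ⊢
        exact ih s n' h

def Ev (t : ℕ → A) (n : ℕ) (v : B) : Prop :=
  ∃ R : ℕ, ∀ r ≥ R, (stewT (prefT t r)).getD n B.bq = v

def shf (t : ℕ → A) : ℕ → A := fun i => t (i + 1)

lemma prefT_succ (t : ℕ → A) (r : ℕ) : prefT t (r + 1) = prefT t r ++ [t r] := by
  rw [prefT, List.ofFn_succ', List.concat_eq_append]
  rfl

lemma prefT_succ_head (t : ℕ → A) (r : ℕ) : prefT t (r + 1) = t 0 :: prefT (shf t) r := by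
  simp [prefT, List.ofFn_succ, shf]

lemma prefT_length (t : ℕ → A) (r : ℕ) : (prefT t r).length = r := by simp [prefT]

lemma n_lt_pow (n r : ℕ) (h : n < r) : n < 3 ^ r :=
  lt_of_lt_of_le h (le_of_lt (Nat.lt_pow_self (by norm_num)))

lemma step_pres (u : List A) (g : A) (n : ℕ) (hn : n < (stewT u).length)
    (h : (stewT u).getD n B.bq ≠ B.bq) :
    (stewT (u ++ [g])).getD n B.bq = (stewT u).getD n B.bq := by
  have he : stewT (u ++ [g]) = fill (stewT u ++ stewT u ++ stewT u) (pat g) := by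
    show Trev ((u ++ [g]).reverse) = _
    rw [List.reverse_append]
    rfl
  rw [he]
  have hap : (stewT u ++ stewT u ++ stewT u).getD n B.bq = (stewT u).getD n B.bq := by
    rw [List.getD_append _ _ _ _ (by simp; omega), List.getD_append _ _ _ _ hn]
  rw [fill_getD_ne _ _ _ (by rw [hap]; exact h), hap]

lemma Ev_exists (t : ℕ → A) (n : ℕ) : ∃ v, Ev t n v := by
  by_cases h : ∃ r, r ≥ n + 1 ∧ (stewT (prefT t r)).getD n B.bq ≠ B.bq
  · obtain ⟨r1, hr1, hne⟩ := h
    refine ⟨(stewT (prefT t r1)).getD n B.bq, r1, ?_⟩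
    have key : ∀ d : ℕ, (stewT (prefT t (r1 + d))).getD n B.bq = (stewT (prefT t r1)).getD n B.bq := by
      intro d
      induction d with
      | zero => rfl
      | succ d' ih =>
        have hlen : n < (stewT (prefT t (r1 + d'))).length := by
          rw [stewT_length, prefT_length]
          exact n_lt_pow n _ (by omega)
        rw [show r1 + (d' + 1) = (r1 + d') + 1 by omega, prefT_succ,
          step_pres _ _ _ hlen (by rw [ih]; exact hne), ih]
    intro r hr
    have : r = r1 + (r - r1) := by omega
    rw [this, key]
  · push_neg at h
    exact ⟨B.bq, n + 1, fun r hr => h r hr⟩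

lemma Ev_unique {t : ℕ → A} {n : ℕ} {v v' : B} (h : Ev t n v) (h' : Ev t n v') : v = v' := by
  obtain ⟨R, hR⟩ := h
  obtain ⟨R', hR'⟩ := h'
  rw [← hR (max R R') (le_max_left _ _), hR' (max R R') (le_max_right _ _)]

lemma stewInf_ev (t : ℕ → A) (n : ℕ) : Ev t n (stewInf t n) :=
  Classical.epsilon_spec (Ev_exists t n)

lemma stewInf_eq {t : ℕ → A} {n : ℕ} {v : B} (h : Ev t n v) : stewInf t n = v :=
  Ev_unique (stewInf_ev t n) h

lemma master (t : ℕ → A) (j m : ℕ) (hm : m < 3) :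
    stewInf t (3 * j + m) =
      if m = sA (t 0) then stewInf (shf t) j else (pat (t 0)).getD m B.bq := by
  apply stewInf_eq
  obtain ⟨R, hR⟩ := stewInf_ev (shf t) j
  refine ⟨max (R + 1) (j + 2), fun r hr => ?_⟩
  obtain ⟨r', rfl⟩ : ∃ r', r = r' + 1 := ⟨r - 1, by omega⟩
  rw [prefT_succ_head, stewT_cons]
  have hj : j < (stewT (prefT (shf t) r')).length := by
    rw [stewT_length, prefT_length]
    exact n_lt_pow j _ (by omega)
  rw [flatMap3_getD _ _ _ _ hm hj, subP_getD _ _ _ hm, hR r' (by omega)]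

lemma masterN (t : ℕ → A) (n : ℕ) :
    stewInf t n =
      if n % 3 = sA (t 0) then stewInf (shf t) (n / 3) else (pat (t 0)).getD (n % 3) B.bq := by
  have h := master t (n / 3) (n % 3) (Nat.mod_lt _ (by norm_num))
  rw [Nat.div_add_mod] at h
  exact h

def qp : List A → ℕ
  | [] => 0
  | g :: u => 3 * qp u + sA g

lemma stewfix : ∀ (r : ℕ) (t : ℕ → A) (n : ℕ), n < 3 ^ r → n ≠ qp (prefT t r) →
    stewInf t n = (stewT (prefT t r)).getD n B.bq := by
  intro r
  induction r with
  | zero =>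
    intro t n h1 h2
    interval_cases n
    exact absurd rfl h2
  | succ r' ih =>
    intro t n h1 h2
    have hd : n = 3 * (n / 3) + n % 3 := by omega
    have hq : qp (prefT t (r' + 1)) = 3 * qp (prefT (shf t) r') + sA (t 0) := by
      rw [prefT_succ_head]; rfl
    have hj : n / 3 < 3 ^ r' := by
      have : n < 3 ^ r' * 3 := by rw [← pow_succ]; exact h1
      omega
    rw [masterN, prefT_succ_head, stewT_cons]
    have hjl : n / 3 < (stewT (prefT (shf t) r')).length := by rw [stewT_length, prefT_length]; exact hj
    rw [show (3 : ℕ) ^ r' = 3 ^ r' from rfl] at hj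
    rw [show n = 3 * (n / 3) + n % 3 from hd]
    rw [flatMap3_getD _ _ _ _ (by omega) hjl]
    rw [subP_getD _ _ _ (by omega)]
    rw [show 3 * (n / 3) + n % 3 = n from hd.symm]
    by_cases hc : n % 3 = sA (t 0)
    · rw [if_pos hc, if_pos hc]
      apply ih (shf t) (n / 3) hj
      intro he
      apply h2
      rw [hq, ← he, ← hc]
      omega
    · rw [if_neg hc, if_neg hc]

def Sq (y : ℕ → B) (n : ℕ) : Prop := ∃ i : ℕ, ∀ j < n, y (i + j) = y (i + n + j)

set_option maxRecDepth 10000 in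
lemma find1 : ∀ g0 g1 g2 : A, ∃ i : Fin 26,
    (i : ℕ) ≠ qp [g0, g1, g2] ∧ (i : ℕ) + 1 ≠ qp [g0, g1, g2] ∧
    (stewT [g0, g1, g2]).getD i B.bq = (stewT [g0, g1, g2]).getD ((i : ℕ) + 1) B.bq := by
  decide

set_option maxRecDepth 10000 in
lemma find2 : ∀ g0 g1 g2 : A, ∃ i : Fin 24,
    ((i : ℕ) ≠ qp [g0, g1, g2] ∧ (i : ℕ) + 1 ≠ qp [g0, g1, g2] ∧
     (i : ℕ) + 2 ≠ qp [g0, g1, g2] ∧ (i : ℕ) + 3 ≠ qp [g0, g1, g2]) ∧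
    (stewT [g0, g1, g2]).getD i B.bq = (stewT [g0, g1, g2]).getD ((i : ℕ) + 2) B.bq ∧
    (stewT [g0, g1, g2]).getD ((i : ℕ) + 1) B.bq = (stewT [g0, g1, g2]).getD ((i : ℕ) + 3) B.bq := by
  decide

lemma prefT3 (t : ℕ → A) : prefT t 3 = [t 0, t 1, t 2] := by
  rw [prefT_succ_head, prefT_succ_head, prefT_succ_head]
  rfl

lemma base1 (t : ℕ → A) : Sq (stewInf t) 1 := by
  obtain ⟨i, h0, h1, he⟩ := find1 (t 0) (t 1) (t 2)
  refine ⟨i, fun j hj => ?_⟩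
  interval_cases j
  have hi : (i : ℕ) < 26 := i.isLt
  rw [stewfix 3 t ((i : ℕ) + 0) (by norm_num; omega) (by rw [prefT3]; simpa using h0),
      stewfix 3 t ((i : ℕ) + 1 + 0) (by norm_num; omega) (by rw [prefT3]; simpa using h1),
      prefT3]
  simpa using he

lemma base2 (t : ℕ → A) : Sq (stewInf t) 2 := by
  obtain ⟨i, ⟨h0, h1, h2, h3⟩, he1, he2⟩ := find2 (t 0) (t 1) (t 2)
  refine ⟨i, fun j hj => ?_⟩
  have hi : (i : ℕ) < 24 := i.isLt
  interval_cases j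
  · rw [stewfix 3 t ((i : ℕ) + 0) (by norm_num; omega) (by rw [prefT3]; simpa using h0),
        stewfix 3 t ((i : ℕ) + 2 + 0) (by norm_num; omega)
          (by rw [prefT3]; simpa using h2), prefT3]
    simpa using he1
  · rw [stewfix 3 t ((i : ℕ) + 1) (by norm_num; omega) (by rw [prefT3]; simpa using h1),
        stewfix 3 t ((i : ℕ) + 2 + 1) (by norm_num; omega)
          (by rw [prefT3]; simpa [show (i:ℕ)+2+1 = (i:ℕ)+3 by omega] using h3), prefT3]
    have : (i : ℕ) + 2 + 1 = (i : ℕ) + 3 := by omega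
    rw [this]
    simpa using he2

lemma liftSq (t : ℕ → A) (n : ℕ) (h : Sq (stewInf (shf t)) n) : Sq (stewInf t) (3 * n) := by
  obtain ⟨i, hs⟩ := h
  refine ⟨3 * i, fun j hj => ?_⟩
  have hm : j % 3 < 3 := Nat.mod_lt _ (by norm_num)
  have e1 : 3 * i + j = 3 * (i + j / 3) + j % 3 := by omega
  have e2 : 3 * i + 3 * n + j = 3 * (i + n + j / 3) + j % 3 := by omega
  rw [e1, e2, master t _ _ hm, master t _ _ hm, hs (j / 3) (by omega)]

def shiftk (k : ℕ) (t : ℕ → A) : ℕ → A := fun i => t (i + k)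

lemma Sqpow : ∀ (k : ℕ) (t : ℕ → A) (n : ℕ),
    Sq (stewInf (shiftk k t)) n → Sq (stewInf t) (3 ^ k * n) := by
  intro k
  induction k with
  | zero => intro t n h; rw [pow_zero, one_mul]; exact h
  | succ k' ih =>
    intro t n h
    have h2 : Sq (stewInf (shf t)) (3 ^ k' * n) := ih (shf t) n h
    have h3 := liftSq t _ h2
    rw [show 3 ^ (k' + 1) * n = 3 * (3 ^ k' * n) by ring]
    exact h3

lemma Sq_to_sq {y : ℕ → B} {n : ℕ} (h : Sq y n) :
    ∃ x : List B, x.length = n ∧ FactorOf (x ++ x) y := by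
  obtain ⟨i, hs⟩ := h
  refine ⟨List.ofFn (fun j : Fin n => y (i + j)), by simp, i, fun j hj => ?_⟩
  have hlen : (List.ofFn (fun j : Fin n => y (i + j))).length = n := by simp
  have hj' : j < n + n := by
    rw [List.length_append, hlen] at hj
    omega
  by_cases hc : j < n
  · rw [List.getD_append _ _ _ _ (by rw [hlen]; exact hc),
      List.getD_eq_getElem _ _ (by rw [hlen]; exact hc)]
    simp
  · rw [List.getD_append_right _ _ _ _ (by rw [hlen]; omega)]
    rw [hlen, List.getD_eq_getElem _ _ (by rw [hlen]; omega)]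
    simp only [List.getElem_ofFn]
    have h2 := hs (j - n) (by omega)
    rw [show i + n + (j - n) = i + j by omega] at h2
    simpa using h2

lemma sq_to_Sq {y : ℕ → B} {n : ℕ}
    (h : ∃ x : List B, x.length = n ∧ FactorOf (x ++ x) y) : Sq y n := by
  obtain ⟨x, hl, i, hF⟩ := h
  refine ⟨i, fun j hj => ?_⟩
  have h1 := hF j (by simp [hl]; omega)
  have h2 := hF (n + j) (by simp [hl]; omega)
  rw [List.getD_append _ _ _ _ (by omega)] at h1
  rw [List.getD_append_right _ _ _ _ (by omega)] at h2
  rw [hl, show n + j - n = j by omega] at h2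
  rw [show i + (n + j) = i + n + j by omega] at h2
  rw [← h1, ← h2]

lemma pat_ne : ∀ (g : A) (m1 m2 : Fin 3), m1 ≠ m2 → (m1 : ℕ) ≠ sA g → (m2 : ℕ) ≠ sA g →
    (pat g).getD m1 B.bq ≠ (pat g).getD m2 B.bq := by decide

lemma pick_m (s nm : ℕ) (hs : s < 3) (hnm : nm = 1 ∨ nm = 2) :
    ∃ m, m < 3 ∧ m ≠ s ∧ (m + nm) % 3 ≠ s ∧ (m + nm) % 3 ≠ m := by
  interval_cases s <;> rcases hnm with rfl | rfl
  · exact ⟨1, by omega, by omega, by omega, by omega⟩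
  · exact ⟨2, by omega, by omega, by omega, by omega⟩
  · exact ⟨2, by omega, by omega, by omega, by omega⟩
  · exact ⟨0, by omega, by omega, by omega, by omega⟩
  · exact ⟨0, by omega, by omega, by omega, by omega⟩
  · exact ⟨1, by omega, by omega, by omega, by omega⟩

lemma no_nondiv (t : ℕ → A) (n : ℕ) (h3 : 3 ≤ n) (hmod : n % 3 ≠ 0) :
    ¬ Sq (stewInf t) n := by
  rintro ⟨i, hs⟩
  obtain ⟨s0, hsA, hs0⟩ : ∃ s0, sA (t 0) = s0 ∧ s0 < 3 := ⟨_, rfl, sA_lt _⟩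
  obtain ⟨m, hm3, hms, hsc, hmm⟩ := pick_m s0 (n % 3) hs0 (by omega)
  have hij : (i + (3 + m - i % 3) % 3) % 3 = m := by omega
  have hjn : (3 + m - i % 3) % 3 < n := by omega
  have h1 : stewInf t (i + (3 + m - i % 3) % 3) = (pat (t 0)).getD m B.bq := by
    rw [masterN, hij, hsA, if_neg hms]
  have h2 : stewInf t (i + n + (3 + m - i % 3) % 3) =
      (pat (t 0)).getD ((m + n % 3) % 3) B.bq := by
    rw [masterN, hsA, show (i + n + (3 + m - i % 3) % 3) % 3 = (m + n % 3) % 3 by omega,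
      if_neg hsc]
  have hkey := hs _ hjn
  rw [h1, h2] at hkey
  exact pat_ne (t 0) ⟨m, hm3⟩ ⟨(m + n % 3) % 3, by omega⟩
    (by simp [Fin.ext_iff]; omega) (by simpa [hsA] using hms) (by simpa [hsA] using hsc) hkey

lemma desub (t : ℕ → A) (n i : ℕ) (hn : 0 < n) (h3 : n % 3 = 0)
    (hs : ∀ j < n, stewInf t (i + j) = stewInf t (i + n + j)) :
    Sq (stewInf (shf t)) (n / 3) := by
  obtain ⟨s0, hsA, hs0⟩ : ∃ s0, sA (t 0) = s0 ∧ s0 < 3 := ⟨_, rfl, sA_lt _⟩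
  refine ⟨(i + 2 - s0) / 3, fun a ha => ?_⟩
  set j0 := (i + 2 - s0) / 3 with hj0
  have hb1 : i ≤ 3 * j0 + s0 := by omega
  have hb2 : 3 * j0 + s0 < i + 3 := by omega
  have hx1 : 3 * (j0 + a) + s0 - i < n := by omega
  have hkey := hs _ hx1
  rw [show i + (3 * (j0 + a) + s0 - i) = 3 * (j0 + a) + s0 by omega,
      show i + n + (3 * (j0 + a) + s0 - i) = 3 * (j0 + a + n / 3) + s0 by omega,
      master t _ s0 hs0, master t _ s0 hs0, hsA, if_pos rfl, if_pos rfl] at hkey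
  rw [show j0 + n / 3 + a = j0 + a + n / 3 by omega]
  exact hkey

lemma noOther : ∀ n : ℕ, ∀ t : ℕ → A, 1 ≤ n → Sq (stewInf t) n →
    ∃ k, n = 3 ^ k ∨ n = 2 * 3 ^ k := by
  intro n
  induction n using Nat.strong_induction_on with
  | _ n ih =>
    intro t h1 hsq
    by_cases hn1 : n = 1
    · exact ⟨0, Or.inl (by omega)⟩
    by_cases hn2 : n = 2
    · exact ⟨0, Or.inr (by omega)⟩
    have h3 : 3 ≤ n := by omega
    by_cases hmod : n % 3 = 0
    · obtain ⟨i, hs⟩ := hsq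
      have hsub := desub t n i (by omega) hmod hs
      obtain ⟨k, hk⟩ := ih (n / 3) (by omega) (shf t) (by omega) hsub
      refine ⟨k + 1, ?_⟩
      have hn3 : n = 3 * (n / 3) := by omega
      rcases hk with hk | hk
      · left; rw [hn3, hk, pow_succ]; ring
      · right; rw [hn3, hk, pow_succ]; ring
    · exact absurd hsq (no_nondiv t n h3 hmod)


theorem stmt_11 (t : ℕ → A) :
    (∀ k : ℕ, (∃ x : List B, x.length = 3 ^ k ∧ FactorOf (x ++ x) (stewInf t)) ∧
      (∃ x : List B, x.length = 2 * 3 ^ k ∧ FactorOf (x ++ x) (stewInf t))) ∧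
    (∀ n : ℕ, 1 ≤ n → (∃ x : List B, x.length = n ∧ FactorOf (x ++ x) (stewInf t)) →
      ∃ k : ℕ, n = 3 ^ k ∨ n = 2 * 3 ^ k) := by
  constructor
  · intro k
    constructor
    · have h := Sqpow k t 1 (base1 (shiftk k t))
      rw [mul_one] at h
      exact Sq_to_sq h
    · have h := Sqpow k t 2 (base2 (shiftk k t))
      rw [show 3 ^ k * 2 = 2 * 3 ^ k by ring] at h
      exact Sq_to_sq h
  · intro n h1 hx
    exact noOther n t h1 (sq_to_Sq hx)
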